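/- arXiv:1510.08148 — 5 statements merged into one kernel-verified Lean document; each statement's English description precedes it below -/
import Mathlib

section
/- If S is an ideal of a commutative ring R and P is a prime ideal of the ring S, then ψ(P) = {x ∈ R : x·S ⊆ P} is a prime ideal of R that does not contain S. -/
/-- `I` is an ideal of the (possibly non-unital) commutative ring `S`,
where `S` is a subset of an ambient commutative ring `R`. -/
def IsIdealIn {R : Type*} [NonUnitalCommRing R] (S I : Set R) : Prop :=
  I ⊆ S ∧ (0 : R) ∈ I ∧ (∀ a ∈ I, ∀ b ∈ I, a + b ∈ I) ∧ (∀ a ∈ I, -a ∈ I) ∧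
    ∀ s ∈ S, ∀ a ∈ I, s * a ∈ I

/-- `S` is an ideal of the ambient commutative ring `R`. -/
def IsIdeal {R : Type*} [NonUnitalCommRing R] (S : Set R) : Prop :=
  IsIdealIn Set.univ S

/-- `P` is a prime ideal of the ring `S` (a proper ideal of `S` such that
`a * b ∈ P` implies `a ∈ P` or `b ∈ P` for `a, b ∈ S`). -/
def IsPrimeIn {R : Type*} [NonUnitalCommRing R] (S P : Set R) : Prop :=
  IsIdealIn S P ∧ P ≠ S ∧ ∀ a ∈ S, ∀ b ∈ S, a * b ∈ P → a ∈ P ∨ b ∈ P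

/-- `ψ(I) = {x ∈ R : x·S ⊆ I}`. -/
def psi {R : Type*} [NonUnitalCommRing R] (S I : Set R) : Set R :=
  {x : R | ∀ s ∈ S, x * s ∈ I}

/-- The kernel of `Spec S`, i.e. the intersection of all prime ideals of `S`
(which is the nilradical `N(S)` of `S`). -/
def NKset {R : Type*} [NonUnitalCommRing R] (S : Set R) : Set R :=
  ⋂ P ∈ {P : Set R | IsPrimeIn S P}, P

section Psi

variable {R : Type*} [NonUnitalCommRing R] {S I P : Set R}

theorem IsIdeal.mul_mem_left (hS : IsIdeal S) (r : R) {s : R} (hs : s ∈ S) : r * s ∈ S :=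
  hS.2.2.2.2 r trivial s hs

theorem IsIdeal.isIdealIn_univ_psi (hS : IsIdeal S) (hI : IsIdealIn S I) :
    IsIdealIn Set.univ (psi S I) := by
  obtain ⟨-, hI0, hIadd, hIneg, -⟩ := hI
  refine ⟨Set.subset_univ _, fun s _ => ?_, fun a ha b hb s hs => ?_, fun a ha s hs => ?_,
    fun r _ a ha s hs => ?_⟩
  · simpa only [zero_mul] using hI0
  · simpa only [add_mul] using hIadd _ (ha s hs) _ (hb s hs)
  · simpa only [neg_mul] using hIneg _ (ha s hs)
  · rw [mul_comm r a, mul_assoc]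
    exact ha _ (hS.mul_mem_left r hs)

theorem IsPrimeIn.not_subset_psi (hP : IsPrimeIn S P) : ¬ S ⊆ psi S P := by
  obtain ⟨⟨hPS, -⟩, hPne, hprime⟩ := hP
  refine fun h => hPne (hPS.antisymm fun a ha => ?_)
  exact (hprime a ha a ha (h ha a ha)).elim id id

theorem IsPrimeIn.psi_ne_univ (hP : IsPrimeIn S P) : psi S P ≠ Set.univ := fun h =>
  hP.not_subset_psi (h ▸ Set.subset_univ S)

/-- If `a s ∉ P` and `b t ∉ P` with `s, t ∈ S`, primality of `P` in `S` gives
`(a b)(s t) = (a s)(b t) ∉ P`. -/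
theorem IsPrimeIn.mem_or_mem_psi (hS : IsIdeal S) (hP : IsPrimeIn S P) {a b : R}
    (hab : a * b ∈ psi S P) : a ∈ psi S P ∨ b ∈ psi S P := by
  by_contra! h
  obtain ⟨⟨s, hs, has⟩, ⟨t, ht, hbt⟩⟩ := And.imp Set.not_subset.1 Set.not_subset.1 h
  have hmem : (a * s) * (b * t) ∈ P :=
    mul_mul_mul_comm a s b t ▸ hab (s * t) (hS.mul_mem_left s ht)
  rcases hP.2.2 _ (hS.mul_mem_left a hs) _ (hS.mul_mem_left b ht) hmem with h' | h'
  exacts [has h', hbt h']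

end Psi

/-- If `S` is an ideal of a commutative ring `R` and `P` is a prime ideal of the ring `S`,
then `ψ(P) = {x ∈ R : x·S ⊆ P}` is a prime ideal of `R` not containing `S`. -/
theorem psi_prime_not_contains {R : Type*} [NonUnitalCommRing R] {S P : Set R}
    (hS : IsIdeal S) (hP : IsPrimeIn S P) :
    IsPrimeIn (Set.univ : Set R) (psi S P) ∧ ¬ S ⊆ psi S P :=
  ⟨⟨hS.isIdealIn_univ_psi hP.1, hP.psi_ne_univ, fun _ _ _ _ => hP.mem_or_mem_psi hS⟩,
    hP.not_subset_psi⟩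
end

section
/- If S is an ideal of a commutative ring R and P, Q are prime ideals of S with ψ(P) = ψ(Q), then P = Q; i.e., the map ψ from prime ideals of S to prime ideals of R is injective. -/
section

variable {R : Type*} [NonUnitalCommRing R] {S : Set R}

theorem subset_psi_of_isIdealIn {I : Set R} (hI : IsIdealIn S I) : I ⊆ psi S I :=
  fun x hx s hs => mul_comm s x ▸ hI.2.2.2.2 s hs x hx

/-- A witness `x ∈ (ψ(P) ∩ S) \ P` would force `S ⊆ P` by primality,
as `x * s ∈ P` for all `s ∈ S`. -/
theorem psi_inter_subset_of_isPrimeIn {P : Set R} (hP : IsPrimeIn S P) : psi S P ∩ S ⊆ P := by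
  obtain ⟨⟨hPS, -⟩, hPne, hprime⟩ := hP
  rintro x ⟨hxψ, hxS⟩
  by_contra hxP
  exact hPne <| hPS.antisymm fun s hs => (hprime x hxS s hs (hxψ s hs)).resolve_left hxP

theorem psi_inter_eq_of_isPrimeIn {P : Set R} (hP : IsPrimeIn S P) : psi S P ∩ S = P :=
  (psi_inter_subset_of_isPrimeIn hP).antisymm
    (Set.subset_inter (subset_psi_of_isIdealIn hP.1) hP.1.1)

end

theorem psi_injective_general {R : Type*} [NonUnitalCommRing R] {S P Q : Set R}
    (hP : IsPrimeIn S P) (hQ : IsPrimeIn S Q)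
    (h : psi S P = psi S Q) : P = Q := by
  rw [← psi_inter_eq_of_isPrimeIn hP, ← psi_inter_eq_of_isPrimeIn hQ, h]

/-- `ψ` is injective on prime ideals of `S`. -/
theorem psi_injective {R : Type*} [NonUnitalCommRing R] {S P Q : Set R}
    (hS : IsIdeal S) (hP : IsPrimeIn S P) (hQ : IsPrimeIn S Q)
    (h : psi S P = psi S Q) : P = Q :=
  psi_injective_general hP hQ h
end

section
/- If S is an ideal of a commutative ring R and Q is a prime ideal of R not containing S, then Q ∩ S is a prime ideal of the ring S and ψ(Q ∩ S) = Q. -/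
section

variable {R : Type*} [NonUnitalCommRing R]

theorem IsIdealIn.inter {T Q S : Set R} (hQ : IsIdealIn T Q) (hS : IsIdealIn T S) :
    IsIdealIn S (Q ∩ S) := by
  obtain ⟨_, hQ0, hQadd, hQneg, hQmul⟩ := hQ
  obtain ⟨hST, hS0, hSadd, hSneg, hSmul⟩ := hS
  exact ⟨Set.inter_subset_right, ⟨hQ0, hS0⟩,
    fun a ha b hb => ⟨hQadd a ha.1 b hb.1, hSadd a ha.2 b hb.2⟩,
    fun a ha => ⟨hQneg a ha.1, hSneg a ha.2⟩,
    fun s hs a ha => ⟨hQmul s (hST hs) a ha.1, hSmul s (hST hs) a ha.2⟩⟩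

theorem IsPrimeIn.inter {T Q S : Set R} (hQ : IsPrimeIn T Q) (hS : IsIdealIn T S)
    (hns : ¬ S ⊆ Q) : IsPrimeIn S (Q ∩ S) := by
  obtain ⟨hQideal, -, hQprime⟩ := hQ
  refine ⟨hQideal.inter hS, fun h => hns (h ▸ Set.inter_subset_left), ?_⟩
  intro a ha b hb hab
  exact (hQprime a (hS.1 ha) b (hS.1 hb) hab.1).imp (⟨·, ha⟩) (⟨·, hb⟩)

theorem psi_mono {S I J : Set R} (hIJ : I ⊆ J) : psi S I ⊆ psi S J :=
  fun _ hx s hs => hIJ (hx s hs)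

theorem psi_subset_of_isPrimeIn {S Q : Set R} (hQ : IsPrimeIn Set.univ Q) (hns : ¬ S ⊆ Q) :
    psi S Q ⊆ Q := by
  obtain ⟨s, hsS, hsQ⟩ := Set.not_subset.mp hns
  intro x hx
  exact (hQ.2.2 x trivial s trivial (hx s hsS)).resolve_right hsQ

theorem subset_psi_inter {S Q : Set R} (hS : IsIdeal S) (hQ : IsIdeal Q) :
    Q ⊆ psi S (Q ∩ S) := by
  intro x hx s hs
  exact ⟨mul_comm s x ▸ hQ.2.2.2.2 s trivial x hx, hS.2.2.2.2 x trivial s hs⟩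

end

/-- If `Q` is a prime ideal of `R` not containing `S` then `Q ∩ S` is a prime ideal of
the ring `S` and `ψ(Q ∩ S) = Q`. -/
theorem inter_prime_and_psi {R : Type*} [NonUnitalCommRing R] {S Q : Set R}
    (hS : IsIdeal S) (hQ : IsPrimeIn (Set.univ : Set R) Q) (hns : ¬ S ⊆ Q) :
    IsPrimeIn S (Q ∩ S) ∧ psi S (Q ∩ S) = Q := by
  refine ⟨hQ.inter hS hns, Set.Subset.antisymm ?_ (subset_psi_inter hS hQ.1)⟩
  exact (psi_mono Set.inter_subset_left).trans (psi_subset_of_isPrimeIn hQ hns)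
end

section
/- Let h : R → M be a ring homomorphism, let S be an ideal of R and T an ideal of M with h(S) = T. Then for every prime ideal P of T, h⁻¹(ψ_{(T,M)}(P)) = ψ_{(S,R)}(h⁻¹(P)). -/
theorem preimage_psi_image {R M F : Type*} [NonUnitalCommRing R] [NonUnitalCommRing M]
    [FunLike F R M] [MulHomClass F R M] (h : F) (S : Set R) (I : Set M) :
    h ⁻¹' psi (h '' S) I = psi S (h ⁻¹' I) := by
  ext x
  simp only [psi, Set.mem_preimage, Set.mem_ofPred_eq, Set.forall_mem_image, map_mul]

theorem preimage_psi_general {R M : Type*} [NonUnitalCommRing R] [NonUnitalCommRing M]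
    (h : R →ₙ+* M) {S : Set R} {T : Set M}
    (himg : h '' S = T) {P : Set M} :
    h ⁻¹' (psi T P) = psi S (h ⁻¹' P) := by
  rw [← himg, preimage_psi_image]

/-- If `h : R → M` is a ring homomorphism, `S` an ideal of `R`, `T` an ideal of `M`
with `h(S) = T`, then for every prime ideal `P` of `T`,
`h⁻¹(ψ_{(T,M)}(P)) = ψ_{(S,R)}(h⁻¹(P))`. -/
theorem preimage_psi {R M : Type*} [NonUnitalCommRing R] [NonUnitalCommRing M]
    (h : R →ₙ+* M) {S : Set R} {T : Set M} (hS : IsIdeal S) (hT : IsIdeal T)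
    (himg : h '' S = T) {P : Set M} (hP : IsPrimeIn T P) :
    h ⁻¹' (psi T P) = psi S (h ⁻¹' P) :=
  preimage_psi_general h himg
end

section
/- Let B be a Boolean ring without identity (every element idempotent, no multiplicative identity). In the unitalization U₀(B), the ideal ψ({0}) = {(a,α) ∈ U₀(B) : (a,α)·(B × {0}) ⊆ {0}} equals {0} × 2ℤ. -/
/-! In a Boolean ring `x + x = 0`, so `(n, a) * b = n • b + a * b` only depends on `n` modulo 2.
For even `n` it is `a * b`, which vanishes for all `b` only when `a = a * a = 0`; for odd `n` it
is `b + a * b`, and its vanishing for all `b` would make `-a` an identity of `B`. -/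

section AddSelfEqZero

variable {G : Type*} [AddGroup G]

theorem Even.zsmul_eq_zero_of_add_self_eq_zero (h : ∀ x : G, x + x = 0) {n : ℤ} (hn : Even n)
    (x : G) : n • x = 0 := by
  obtain ⟨k, rfl⟩ := hn
  rw [add_zsmul, h]

theorem Odd.zsmul_eq_self_of_add_self_eq_zero (h : ∀ x : G, x + x = 0) {n : ℤ} (hn : Odd n)
    (x : G) : n • x = x := by
  obtain ⟨k, rfl⟩ := hn
  rw [add_zsmul, (even_two_mul k).zsmul_eq_zero_of_add_self_eq_zero h, zero_add, one_zsmul]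

end AddSelfEqZero

section Idempotent

variable {B : Type*} [NonUnitalRing B]

theorem add_self_eq_zero_of_forall_mul_self (hB : ∀ x : B, x * x = x) (x : B) : x + x = 0 := by
  have h := hB (x + x)
  rw [mul_add, add_mul, hB] at h
  simpa using h

theorem forall_mul_eq_zero_iff_of_forall_mul_self (hB : ∀ x : B, x * x = x) (a : B) :
    (∀ b, a * b = 0) ↔ a = 0 :=
  ⟨fun h => hB a ▸ h a, fun h b => by rw [h, zero_mul]⟩

end Idempotent

theorem Unitization.mul_inr_eq_zero_iff {R A : Type*} [CommRing R] [NonUnitalRing A] [Module R A]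
    (z : Unitization R A) (b : A) :
    z * (b : Unitization R A) = 0 ↔ z.fst • b + z.snd * b = 0 := by
  rw [Unitization.ext_iff]
  simp [Unitization.fst_mul, Unitization.snd_mul]

/-- Let `B` be a Boolean ring without identity. In the unitalization
`U₀(B) = B × ℤ` (Mathlib's `Unitization ℤ B`), the ideal
`ψ({0}) = {z ∈ U₀(B) : z·(B × {0}) ⊆ {0}}` equals `{0} × 2ℤ`. -/
theorem boolean_psi_zero (B : Type*) [NonUnitalCommRing B]
    (hB : ∀ x : B, x * x = x) (h1 : ¬ ∃ e : B, ∀ x : B, e * x = x) :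
    {z : Unitization ℤ B | ∀ b : B, z * (b : Unitization ℤ B) = 0} =
      {z : Unitization ℤ B | z.snd = 0 ∧ (2 : ℤ) ∣ z.fst} := by
  have hchar := add_self_eq_zero_of_forall_mul_self hB
  ext z
  simp only [Set.mem_ofPred_eq, Unitization.mul_inr_eq_zero_iff, ← even_iff_two_dvd]
  rcases Int.even_or_odd z.fst with heven | hodd
  · simp only [heven.zsmul_eq_zero_of_add_self_eq_zero hchar, zero_add,
      forall_mul_eq_zero_iff_of_forall_mul_self hB, heven, and_true]
  · refine ⟨fun hz => (h1 ⟨-z.snd, fun b => ?_⟩).elim,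
      fun hz => (Int.not_even_iff_odd.2 hodd hz.2).elim⟩
    have hb := hz b
    rw [hodd.zsmul_eq_self_of_add_self_eq_zero hchar, add_comm] at hb
    rwa [neg_mul, neg_eq_iff_add_eq_zero]
end
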